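/- arXiv:1706.00065 — 4 statements merged into one kernel-verified Lean document; each statement's English description precedes it below -/
import Mathlib

section
/- Let J₁ = (f₁,…,f_m) and J₂ = (g₁,…,g_m) be ideals contained in an ideal I of a commutative ring R, with fᵢ − gᵢ ∈ I² for all i, and suppose J₁ ⊆ I is Aluffi torsion-free. Let 𝒵₁, 𝒵₂ ⊆ Rᵐ be the first syzygy modules of (f₁,…,f_m) and (g₁,…,g_m) respectively. Then J₂ ⊆ I is Aluffi torsion-free if and only if 𝒵₁ ∩ Iⁿ·Rᵐ ⊆ 𝒵₂ + Iⁿ⁺¹·Rᵐ for all n ≥ 0. -/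
/-!
Since `fᵢ ≡ gᵢ mod I²`, for coefficients `aᵢ ∈ Iⁿ` the sums `Σ aᵢfᵢ` and `Σ aᵢgᵢ` agree modulo
`Iⁿ⁺²`. If `J₂ ⊆ I` is Aluffi torsion-free, a syzygy `a` of `f` with entries in `Iⁿ` thus gives
`Σ aᵢgᵢ ∈ J₂ ∩ Iⁿ⁺² = J₂Iⁿ⁺¹`, i.e. `Σ aᵢgᵢ = Σ bᵢgᵢ` with `bᵢ ∈ Iⁿ⁺¹`.
Conversely, `J₂ ∩ Iⁿ⁺² ⊆ J₂Iⁿ⁺¹` is proved by induction on `n`: the induction hypothesis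
writes `x = Σ aᵢgᵢ` with `aᵢ ∈ Iⁿ`; torsion-freeness of `J₁` gives `Σ aᵢfᵢ = Σ cᵢfᵢ` with
`cᵢ ∈ Iⁿ⁺¹`; lifting the syzygy `a − c` of `f` to a syzygy `a − c − b` of `g` with `bᵢ ∈ Iⁿ⁺¹`
shows `x = Σ (cᵢ + bᵢ)gᵢ`.
-/

namespace Ideal

variable {R : Type*} [CommRing R] {ι : Type*} [Fintype ι] {I : Ideal R}

theorem mem_span_range_mul_iff {g : ι → R} {K : Ideal R} {x : R} :
    x ∈ span (Set.range g) * K ↔ ∃ a : ι → R, (∀ i, a i ∈ K) ∧ ∑ i, a i * g i = x := by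
  rw [mul_comm, ← smul_eq_mul, Submodule.mem_ideal_smul_span_iff_exists_sum]
  constructor
  · rintro ⟨a, ha, rfl⟩
    exact ⟨a, ha, by simp [Finsupp.sum_fintype]⟩
  · rintro ⟨a, ha, rfl⟩
    exact ⟨Finsupp.equivFunOnFinite.symm a, ha, by simp [Finsupp.sum_fintype]⟩

theorem sum_mul_sub_sum_mul_mem_pow {n k : ℕ} {a f g : ι → R}
    (ha : ∀ i, a i ∈ I ^ n) (hfg : ∀ i, f i - g i ∈ I ^ k) :
    ∑ i, a i * f i - ∑ i, a i * g i ∈ I ^ (n + k) := by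
  rw [← Finset.sum_sub_distrib, pow_add]
  exact sum_mem _ fun i _ => mul_sub (a i) (f i) (g i) ▸ mul_mem_mul (ha i) (hfg i)

def IsAluffiTorsionFree (J I : Ideal R) : Prop :=
  ∀ n : ℕ, 1 ≤ n → J ⊓ I ^ n = J * I ^ (n - 1)

theorem isAluffiTorsionFree_iff {J : Ideal R} :
    J.IsAluffiTorsionFree I ↔ J ≤ I ∧ ∀ n : ℕ, J ⊓ I ^ (n + 1) ≤ J * I ^ n := by
  constructor
  · intro h
    refine ⟨by simpa using h 1 le_rfl, fun n => (h (n + 1) (Nat.le_add_left 1 n)).le⟩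
  · rintro ⟨hJ, h⟩ n hn
    obtain ⟨k, rfl⟩ := Nat.exists_eq_add_of_le' hn
    refine le_antisymm (h k) (le_inf mul_le_left ?_)
    rw [Nat.add_sub_cancel, pow_succ']
    exact mul_mono_left hJ

variable {f g : ι → R} {n : ℕ}

theorem exists_syzygy_lift_of_inf_pow_le
    (hg : span (Set.range g) ⊓ I ^ (n + 2) ≤ span (Set.range g) * I ^ (n + 1))
    (hfg : ∀ i, f i - g i ∈ I ^ 2) {a : ι → R} (hsyz : ∑ i, a i * f i = 0)
    (ha : ∀ i, a i ∈ I ^ n) :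
    ∃ b : ι → R, (∀ i, b i ∈ I ^ (n + 1)) ∧ ∑ i, (a i - b i) * g i = 0 := by
  have hmem : ∑ i, a i * g i ∈ span (Set.range g) ⊓ I ^ (n + 2) := by
    refine ⟨sum_mem _ fun i _ => mul_mem_left _ _ (subset_span ⟨i, rfl⟩), ?_⟩
    simpa [hsyz] using neg_mem (sum_mul_sub_sum_mul_mem_pow ha hfg)
  obtain ⟨b, hb, hbg⟩ := mem_span_range_mul_iff.mp (hg hmem)
  refine ⟨b, hb, ?_⟩
  simp only [sub_mul, Finset.sum_sub_distrib, hbg, sub_self]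

theorem inf_pow_succ_le_of_syzygy_lift
    (hf : span (Set.range f) ⊓ I ^ (n + 2) ≤ span (Set.range f) * I ^ (n + 1))
    (hg : span (Set.range g) ⊓ I ^ (n + 1) ≤ span (Set.range g) * I ^ n)
    (hfg : ∀ i, f i - g i ∈ I ^ 2)
    (hlift : ∀ a : ι → R, ∑ i, a i * f i = 0 → (∀ i, a i ∈ I ^ n) →
      ∃ b : ι → R, (∀ i, b i ∈ I ^ (n + 1)) ∧ ∑ i, (a i - b i) * g i = 0) :
    span (Set.range g) ⊓ I ^ (n + 2) ≤ span (Set.range g) * I ^ (n + 1) := by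
  rintro x ⟨hxg, hxI⟩
  obtain ⟨a, ha, rfl⟩ := mem_span_range_mul_iff.mp
    (hg ⟨hxg, pow_le_pow_right (Nat.le_succ _) hxI⟩)
  have hmem : ∑ i, a i * f i ∈ span (Set.range f) ⊓ I ^ (n + 2) := by
    refine ⟨sum_mem _ fun i _ => mul_mem_left _ _ (subset_span ⟨i, rfl⟩), ?_⟩
    simpa using add_mem hxI (sum_mul_sub_sum_mul_mem_pow ha hfg)
  obtain ⟨c, hc, hcf⟩ := mem_span_range_mul_iff.mp (hf hmem)
  obtain ⟨b, hb, hbg⟩ := hlift (a - c)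
    (by simp only [Pi.sub_apply, sub_mul, Finset.sum_sub_distrib, hcf, sub_self])
    (fun i => sub_mem (ha i) (pow_le_pow_right (Nat.le_succ _) (hc i)))
  refine mem_span_range_mul_iff.mpr ⟨c + b, fun i => add_mem (hc i) (hb i), ?_⟩
  rw [eq_comm, ← sub_eq_zero, ← hbg, ← Finset.sum_sub_distrib]
  exact Finset.sum_congr rfl fun i _ => by simp only [Pi.add_apply, Pi.sub_apply]; ring

end Ideal

theorem syzygy_comparison_general {R : Type*} [CommRing R] {m : ℕ} (f g : Fin m → R)
    (I : Ideal R) (J₁ J₂ : Ideal R)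
    (hJ₁ : J₁ = Ideal.span (Set.range f)) (hJ₂ : J₂ = Ideal.span (Set.range g))
    (h₂I : J₂ ≤ I)
    (hdiff : ∀ i, f i - g i ∈ I ^ 2)
    (hatf₁ : ∀ n : ℕ, 1 ≤ n → J₁ ⊓ I ^ n = J₁ * I ^ (n - 1)) :
    (∀ n : ℕ, 1 ≤ n → J₂ ⊓ I ^ n = J₂ * I ^ (n - 1)) ↔
      (∀ n : ℕ, ∀ a : Fin m → R, (∑ i, a i * f i = 0) → (∀ i, a i ∈ I ^ n) →
        ∃ b : Fin m → R, (∀ i, b i ∈ I ^ (n + 1)) ∧ ∑ i, (a i - b i) * g i = 0) := by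
  subst hJ₁ hJ₂
  obtain ⟨-, hf⟩ := Ideal.isAluffiTorsionFree_iff.mp hatf₁
  change Ideal.IsAluffiTorsionFree _ _ ↔ _
  rw [Ideal.isAluffiTorsionFree_iff]
  constructor
  · rintro ⟨-, hg⟩ n a hsyz ha
    exact Ideal.exists_syzygy_lift_of_inf_pow_le (hg (n + 1)) hdiff hsyz ha
  · refine fun hlift => ⟨h₂I, fun n => ?_⟩
    induction n with
    | zero => simp
    | succ n ih => exact Ideal.inf_pow_succ_le_of_syzygy_lift (hf (n + 1)) ih hdiff (hlift n)

/-- Syzygy comparison theorem: with `fᵢ − gᵢ ∈ I²` and `J₁ = (f) ⊆ I` Aluffi torsion-free,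
`J₂ = (g) ⊆ I` is Aluffi torsion-free iff `𝒵₁ ∩ Iⁿ·Rᵐ ⊆ 𝒵₂ + Iⁿ⁺¹·Rᵐ` for all `n ≥ 0`. -/
theorem syzygy_comparison {R : Type*} [CommRing R] {m : ℕ} (f g : Fin m → R)
    (I : Ideal R) (J₁ J₂ : Ideal R)
    (hJ₁ : J₁ = Ideal.span (Set.range f)) (hJ₂ : J₂ = Ideal.span (Set.range g))
    (h₁I : J₁ ≤ I) (h₂I : J₂ ≤ I)
    (hdiff : ∀ i, f i - g i ∈ I ^ 2)
    (hatf₁ : ∀ n : ℕ, 1 ≤ n → J₁ ⊓ I ^ n = J₁ * I ^ (n - 1)) :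
    (∀ n : ℕ, 1 ≤ n → J₂ ⊓ I ^ n = J₂ * I ^ (n - 1)) ↔
      (∀ n : ℕ, ∀ a : Fin m → R, (∑ i, a i * f i = 0) → (∀ i, a i ∈ I ^ n) →
        ∃ b : Fin m → R, (∀ i, b i ∈ I ^ (n + 1)) ∧ ∑ i, (a i - b i) * g i = 0) :=
  syzygy_comparison_general f g I J₁ J₂ hJ₁ hJ₂ h₂I hdiff hatf₁
end

section
/- Let J₂ ⊆ I be ideals of a commutative ring R and f ∈ I an element such that: (1) (f) ∩ Iⁿ = f·Iⁿ⁻¹ for all n ≥ 1; (2) f is a nonzerodivisor modulo J₂, i.e. (J₂ : f) = J₂; and (3) the images of J₂ and I in R/(f) form an Aluffi torsion-free pair. Then J₂ ∩ Iⁿ = J₂·Iⁿ⁻¹ for all n ≥ 1. -/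
/-!
Modulo `(f)`, torsion-freeness of the images writes every `x ∈ J ∩ Iⁿ⁺¹` as an element of
`J·Iⁿ` plus an element of `(f) ∩ J ∩ Iⁿ⁺¹`. By torsion-freeness of `(f)` the latter is `f z` with
`z ∈ Iⁿ`, and `z ∈ J` because `f` is regular modulo `J`; induction on `n` puts `z` in `J·Iⁿ⁻¹`,
hence `f z ∈ J·Iⁿ`.
-/

namespace Ideal

variable {R : Type*} [CommRing R] {J I : Ideal R}

def AluffiTorsionFree (J I : Ideal R) : Prop :=
  ∀ n : ℕ, 1 ≤ n → J ⊓ I ^ n = J * I ^ (n - 1)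

theorem aluffiTorsionFree_iff : AluffiTorsionFree J I ↔ ∀ n : ℕ, J ⊓ I ^ (n + 1) = J * I ^ n :=
  ⟨fun h n => h (n + 1) n.succ_pos, fun h n hn => by simpa [Nat.sub_add_cancel hn] using h (n - 1)⟩

theorem mul_pow_le_inf_pow_succ (hJI : J ≤ I) (n : ℕ) : J * I ^ n ≤ J ⊓ I ^ (n + 1) :=
  le_inf mul_le_left (pow_succ' I n ▸ mul_mono_left hJI)

theorem inf_pow_succ_eq_mul_sup_of_map_le (K : Ideal R) (hJI : J ≤ I) {n : ℕ}
    (h : J.map (Quotient.mk K) ⊓ I.map (Quotient.mk K) ^ (n + 1) ≤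
      J.map (Quotient.mk K) * I.map (Quotient.mk K) ^ n) :
    J ⊓ I ^ (n + 1) = J * I ^ n ⊔ K ⊓ (J ⊓ I ^ (n + 1)) := by
  have hle : J ⊓ I ^ (n + 1) ≤ J * I ^ n ⊔ K :=
    calc J ⊓ I ^ (n + 1)
        ≤ comap (Quotient.mk K) (map (Quotient.mk K) (J ⊓ I ^ (n + 1))) := le_comap_map
      _ ≤ comap (Quotient.mk K) (map (Quotient.mk K) (J * I ^ n)) := by
        refine comap_mono ((map_inf_le _).trans ?_)
        rwa [Ideal.map_mul, Ideal.map_pow, Ideal.map_pow]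
      _ = J * I ^ n ⊔ K := by
        rw [comap_map_of_surjective' _ Quotient.mk_surjective, mk_ker]
  calc J ⊓ I ^ (n + 1) = (J * I ^ n ⊔ K) ⊓ (J ⊓ I ^ (n + 1)) := (inf_eq_right.mpr hle).symm
    _ = J * I ^ n ⊔ K ⊓ (J ⊓ I ^ (n + 1)) := sup_inf_assoc_of_le K (mul_pow_le_inf_pow_succ hJI n)

theorem span_singleton_inf_inf_pow_le_mul {f : R} (hf : f ∈ I) {n : ℕ}
    (hfI : span {f} ⊓ I ^ (n + 2) ≤ span {f} * I ^ (n + 1))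
    (hreg : J.colon (span {f}) = J) (hJ : J ⊓ I ^ (n + 1) ≤ J * I ^ n) :
    span {f} ⊓ (J ⊓ I ^ (n + 2)) ≤ J * I ^ (n + 1) := by
  rintro x ⟨hxf, hxJ, hxI⟩
  obtain ⟨z, hzI, rfl⟩ := mem_span_singleton_mul.mp (hfI ⟨hxf, hxI⟩)
  have hzJ : z ∈ J := hreg ▸ mem_colon_span_singleton.mpr (mul_comm z f ▸ hxJ)
  rw [pow_succ', mul_left_comm]
  exact mul_mem_mul hf (hJ ⟨hzJ, hzI⟩)

theorem AluffiTorsionFree.of_map_mk_span_singleton {f : R} (hJI : J ≤ I) (hf : f ∈ I)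
    (hfI : AluffiTorsionFree (span {f}) I) (hreg : J.colon (span {f}) = J)
    (hquot : AluffiTorsionFree (J.map (Quotient.mk (span {f}))) (I.map (Quotient.mk (span {f})))) :
    AluffiTorsionFree J I := by
  rw [aluffiTorsionFree_iff] at hfI hquot ⊢
  intro n
  induction n with
  | zero => simpa using hJI
  | succ n ih =>
    refine le_antisymm ?_ (mul_pow_le_inf_pow_succ hJI _)
    rw [inf_pow_succ_eq_mul_sup_of_map_le _ hJI (hquot _).le]
    exact sup_le le_rfl (span_singleton_inf_inf_pow_le_mul hf (hfI _).le hreg ih.le)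

end Ideal

/-- Base case of the descent theorem: if `(f) ⊆ I` is Aluffi torsion-free, `f` is a
nonzerodivisor mod `J₂`, and the images of `J₂ ⊆ I` in `R/(f)` form an Aluffi
torsion-free pair, then `J₂ ⊆ I` is Aluffi torsion-free. -/
theorem aluffi_descent_principal {R : Type*} [CommRing R] (J₂ I : Ideal R)
    (hJ₂I : J₂ ≤ I) (f : R) (hf : f ∈ I)
    (h1 : ∀ n : ℕ, 1 ≤ n → Ideal.span {f} ⊓ I ^ n = Ideal.span {f} * I ^ (n - 1))
    (h2 : Submodule.colon J₂ (Ideal.span {f}) = J₂)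
    (h3 : ∀ n : ℕ, 1 ≤ n →
      (J₂.map (Ideal.Quotient.mk (Ideal.span {f}))) ⊓
          (I.map (Ideal.Quotient.mk (Ideal.span {f}))) ^ n =
        (J₂.map (Ideal.Quotient.mk (Ideal.span {f}))) *
          (I.map (Ideal.Quotient.mk (Ideal.span {f}))) ^ (n - 1)) :
    ∀ n : ℕ, 1 ≤ n → J₂ ⊓ I ^ n = J₂ * I ^ (n - 1) :=
  Ideal.AluffiTorsionFree.of_map_mk_span_singleton hJ₂I hf h1 h2 h3
end

section
/- Let (R,𝔪) be a Noetherian local ring, J₁ ⊆ R an ideal generated by elements of I \ I² where I = J₁ + J₂ for an ideal J₂. Then the pair J₁ ⊆ I is Aluffi torsion-free (J₁ ∩ Iⁿ = J₁·Iⁿ⁻¹ for all n) if and only if for every n ≥ 1 the natural surjection Iⁿ/(Iⁿ⁺¹ + J₁·Iⁿ⁻¹) → Iⁿ/(Iⁿ⁺¹ + Iⁿ ∩ J₁) is an isomorphism. -/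
/-!
Torsion-freeness trivially gives equality of the two kernels. Conversely, equality of the kernels
in degree `m` says `J₁ ∩ Iᵐ ⊆ Iᵐ⁺¹ + J₁·Iᵐ⁻¹`, and the modular law improves this to
`J₁ ∩ Iᵐ ⊆ (J₁ ∩ Iᵐ⁺¹) + J₁·Iᵐ⁻¹`. Iterating from degree `n` on puts `J₁ ∩ Iⁿ` inside
`J₁·Iⁿ⁻¹ + Iᵐ` for every `m`, and since ideals of a Noetherian local ring are closed in the
`I`-adic topology (Krull's intersection theorem for `R ⧸ J₁·Iⁿ⁻¹`), `J₁ ∩ Iⁿ ⊆ J₁·Iⁿ⁻¹`.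
-/

namespace Ideal

variable {R : Type*} [CommRing R]

theorem iInf_pow_sup_eq_of_isLocalRing [IsNoetherianRing R] [IsLocalRing R] {I : Ideal R}
    (hI : I ≠ ⊤) (M : Ideal R) : ⨅ k : ℕ, I ^ k ⊔ M = M := by
  refine le_antisymm (fun x hx => ?_) (le_iInf fun _ => le_sup_right)
  rw [← Quotient.eq_zero_iff_mem]
  refine (IsHausdorff.of_isLocalRing I (R ⧸ M) hI).haus _ fun k => ?_
  rw [SModEq.sub_mem, sub_zero, smul_top_eq_map, Submodule.restrictScalars_mem]
  exact mem_quotient_iff_mem_sup.mpr (mem_iInf.mp hx k)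

variable {I J : Ideal R}

theorem inf_pow_le_mul_sup_inf_pow_succ {m : ℕ}
    (h : J ⊓ I ^ m ≤ I ^ (m + 1) ⊔ J * I ^ (m - 1)) :
    J ⊓ I ^ m ≤ J * I ^ (m - 1) ⊔ (J ⊓ I ^ (m + 1)) :=
  calc J ⊓ I ^ m ≤ (J * I ^ (m - 1) ⊔ I ^ (m + 1)) ⊓ J :=
        le_inf (h.trans_eq (sup_comm _ _)) inf_le_left
    _ = J * I ^ (m - 1) ⊔ (J ⊓ I ^ (m + 1)) := by
      rw [sup_inf_assoc_of_le _ mul_le_left, inf_comm]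

theorem inf_pow_le_mul_sup_inf_pow {n m : ℕ} (hnm : n ≤ m)
    (h : ∀ k, n ≤ k → J ⊓ I ^ k ≤ I ^ (k + 1) ⊔ J * I ^ (k - 1)) :
    J ⊓ I ^ n ≤ J * I ^ (n - 1) ⊔ (J ⊓ I ^ m) := by
  induction m, hnm using Nat.le_induction with
  | base => exact le_sup_right
  | succ m hnm ih =>
    have hmul : J * I ^ (m - 1) ≤ J * I ^ (n - 1) :=
      mul_mono_right (pow_le_pow_right (by omega))
    calc J ⊓ I ^ n ≤ J * I ^ (n - 1) ⊔ (J ⊓ I ^ m) := ih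
      _ ≤ J * I ^ (n - 1) ⊔ (J * I ^ (m - 1) ⊔ (J ⊓ I ^ (m + 1))) :=
        sup_le_sup_left (inf_pow_le_mul_sup_inf_pow_succ (h m hnm)) _
      _ = J * I ^ (n - 1) ⊔ (J ⊓ I ^ (m + 1)) := by
        rw [← sup_assoc, sup_eq_left.mpr hmul]

theorem inf_pow_le_mul_pow_pred [IsNoetherianRing R] [IsLocalRing R] (hI : I ≠ ⊤) {n : ℕ}
    (h : ∀ k, n ≤ k → J ⊓ I ^ k ≤ I ^ (k + 1) ⊔ J * I ^ (k - 1)) :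
    J ⊓ I ^ n ≤ J * I ^ (n - 1) := by
  refine (le_iInf fun k => ?_).trans_eq (iInf_pow_sup_eq_of_isLocalRing hI _)
  calc J ⊓ I ^ n ≤ J * I ^ (n - 1) ⊔ (J ⊓ I ^ (n + k)) :=
        inf_pow_le_mul_sup_inf_pow (by omega) h
    _ ≤ I ^ k ⊔ J * I ^ (n - 1) :=
      sup_le le_sup_right (le_sup_of_le_left (inf_le_right.trans (pow_le_pow_right (by omega))))

theorem mul_pow_pred_le_pow (hJI : J ≤ I) {n : ℕ} (hn : 1 ≤ n) : J * I ^ (n - 1) ≤ I ^ n :=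
  calc J * I ^ (n - 1) ≤ I * I ^ (n - 1) := mul_mono_left hJI
    _ = I ^ n := by rw [← pow_succ', Nat.sub_add_cancel hn]

end Ideal

theorem aluffi_torsion_free_iff_gr_iso_general {R : Type*} [CommRing R] [IsNoetherianRing R]
    [IsLocalRing R] (J₁ I : Ideal R) :
    (∀ n : ℕ, 1 ≤ n → J₁ ⊓ I ^ n = J₁ * I ^ (n - 1)) ↔
      (∀ n : ℕ, 1 ≤ n →
        I ^ (n + 1) + J₁ * I ^ (n - 1) = I ^ (n + 1) + (I ^ n ⊓ J₁)) := by
  simp only [Submodule.add_eq_sup]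
  refine ⟨fun h n hn => by rw [← h n hn, inf_comm], fun h n hn => ?_⟩
  by_cases hItop : I = ⊤
  · rw [hItop, Ideal.top_pow, Ideal.top_pow, inf_top_eq, Ideal.mul_top]
  have hdeg : ∀ k, 1 ≤ k → J₁ ⊓ I ^ k ≤ I ^ (k + 1) ⊔ J₁ * I ^ (k - 1) := fun k hk => by
    rw [h k hk, inf_comm]
    exact le_sup_right
  have hJI : J₁ ≤ I :=
    calc J₁ = J₁ * I ^ (1 - 1) := by rw [Nat.sub_self, pow_zero, Ideal.one_eq_top, Ideal.mul_top]
      _ ≤ I ^ (1 + 1) ⊔ J₁ * I ^ (1 - 1) := le_sup_right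
      _ = I ^ (1 + 1) ⊔ (I ^ 1 ⊓ J₁) := h 1 le_rfl
      _ ≤ I := sup_le (Ideal.pow_le_self two_ne_zero) (inf_le_left.trans_eq (pow_one I))
  exact le_antisymm (Ideal.inf_pow_le_mul_pow_pred hItop fun k hk => hdeg k (hn.trans hk))
    (le_inf Ideal.mul_le_left (Ideal.mul_pow_pred_le_pow hJI hn))

/-- Tangent-cone criterion: for a Noetherian local ring, `J₁` generated by elements of
`I \ I²` with `I = J₁ + J₂`, the pair `J₁ ⊆ I` is Aluffi torsion-free iff for every
`n ≥ 1` the natural surjection `Iⁿ/(Iⁿ⁺¹ + J₁·Iⁿ⁻¹) → Iⁿ/(Iⁿ⁺¹ + Iⁿ ∩ J₁)` is an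
isomorphism, i.e. the two kernels agree: `Iⁿ⁺¹ + J₁·Iⁿ⁻¹ = Iⁿ⁺¹ + (Iⁿ ⊓ J₁)`. -/
theorem aluffi_torsion_free_iff_gr_iso {R : Type*} [CommRing R] [IsNoetherianRing R]
    [IsLocalRing R] (J₁ J₂ I : Ideal R) (hI : I = J₁ + J₂)
    (hgen : ∃ S : Set R, J₁ = Ideal.span S ∧ ∀ s ∈ S, s ∈ I ∧ s ∉ I ^ 2) :
    (∀ n : ℕ, 1 ≤ n → J₁ ⊓ I ^ n = J₁ * I ^ (n - 1)) ↔
      (∀ n : ℕ, 1 ≤ n →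
        I ^ (n + 1) + J₁ * I ^ (n - 1) = I ^ (n + 1) + (I ^ n ⊓ J₁)) :=
  aluffi_torsion_free_iff_gr_iso_general J₁ I
end

section
/- Let R be a Noetherian local ring and J ⊆ I ideals of R. If there exists a generating set f₁,…,f_t of J such that each fᵢ ∈ I \ I², and the initial forms f₁*,…,f_t* generate the ideal J* of initial forms of J in gr_I(R), then J ∩ Iⁿ = J·Iⁿ⁻¹ for all n ≥ 1. -/
/-!
Since `J * I ^ (n - 1) ≤ J`, the modular law turns the hypothesis, applied in degree `n + m`,
into `J ⊓ I ^ n ≤ J * I ^ (n - 1) ⊔ I ^ (n + m)` for every `m`. The intersection over `m` of the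
right-hand sides is `J * I ^ (n - 1)` by Krull's intersection theorem for the finitely generated
module `R ⧸ J * I ^ (n - 1)` over the Noetherian local ring `R`.
-/

namespace Ideal

variable {R : Type*} [CommRing R]

theorem inf_pow_le_mul_pow_sup_pow {J I : Ideal R}
    (hstd : ∀ n : ℕ, 1 ≤ n → J ⊓ I ^ n ≤ J * I ^ (n - 1) + I ^ (n + 1))
    {n : ℕ} (hn : 1 ≤ n) (m : ℕ) : J ⊓ I ^ n ≤ J * I ^ (n - 1) ⊔ I ^ (n + m) := by
  induction m with
  | zero => exact inf_le_right.trans le_sup_right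
  | succ m ih =>
    have hstd' : J ⊓ I ^ (n + m) ≤ J * I ^ (n - 1) ⊔ I ^ (n + m + 1) :=
      (hstd (n + m) (by omega)).trans <|
        sup_le_sup_right (mul_mono_right (pow_le_pow_right (by omega))) _
    calc J ⊓ I ^ n ≤ (J * I ^ (n - 1) ⊔ I ^ (n + m)) ⊓ J := le_inf ih inf_le_left
      _ = J * I ^ (n - 1) ⊔ I ^ (n + m) ⊓ J := sup_inf_assoc_of_le _ mul_le_left
      _ ≤ J * I ^ (n - 1) ⊔ I ^ (n + m + 1) :=
        sup_le le_sup_left (inf_comm (I ^ (n + m)) J ▸ hstd')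

theorem iInf_sup_pow_eq_of_isLocalRing [IsNoetherianRing R] [IsLocalRing R] (K : Ideal R)
    {I : Ideal R} (hI : I ≠ ⊤) : ⨅ m : ℕ, K ⊔ I ^ m = K := by
  refine le_antisymm (fun x hx ↦ ?_) (le_iInf fun _ ↦ le_sup_left)
  rw [← Quotient.eq_zero_iff_mem]
  refine (iInf_pow_smul_eq_bot_of_isLocalRing (M := R ⧸ K) I hI).le
    (Submodule.mem_iInf _ |>.mpr fun m ↦ ?_)
  obtain ⟨k, hk, y, hy, rfl⟩ := Submodule.mem_sup.mp (Submodule.mem_iInf _ |>.mp hx m)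
  have hmk : Quotient.mk K (k + y) = y • (1 : R ⧸ K) := by
    simp [Quotient.eq_zero_iff_mem.mpr hk, Algebra.smul_def]
  exact hmk ▸ Submodule.smul_mem_smul hy Submodule.mem_top

end Ideal

theorem aluffi_torsion_free_of_standard_base_general {R : Type*} [CommRing R] [IsNoetherianRing R]
    [IsLocalRing R] (J I : Ideal R) (hJI : J ≤ I)
    (hstd : ∀ n : ℕ, 1 ≤ n → J ⊓ I ^ n ≤ J * I ^ (n - 1) + I ^ (n + 1)) :
    ∀ n : ℕ, 1 ≤ n → J ⊓ I ^ n = J * I ^ (n - 1) := by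
  intro n hn
  by_cases hI : I = ⊤
  · simp [hI, Ideal.top_pow]
  have hmul_le : J * I ^ (n - 1) ≤ I ^ n :=
    calc J * I ^ (n - 1) ≤ I * I ^ (n - 1) := Ideal.mul_mono_left hJI
      _ = I ^ n := by rw [← pow_succ', Nat.sub_add_cancel hn]
  refine le_antisymm ?_ (le_inf Ideal.mul_le_left hmul_le)
  calc J ⊓ I ^ n ≤ ⨅ m : ℕ, J * I ^ (n - 1) ⊔ I ^ m := le_iInf fun m ↦
        (Ideal.inf_pow_le_mul_pow_sup_pow hstd hn m).trans
          (sup_le_sup_left (Ideal.pow_le_pow_right (by omega)) _)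
    _ = J * I ^ (n - 1) := Ideal.iInf_sup_pow_eq_of_isLocalRing _ hI

/-- Valabrega–Valla criterion: in a Noetherian local ring, if `J` admits a generating
set `f₁,…,f_t` with each `fᵢ ∈ I \ I²` whose initial forms generate the ideal `J*` of
initial forms in `gr_I(R)` (concretely: `J ∩ Iⁿ ⊆ J·Iⁿ⁻¹ + Iⁿ⁺¹` for all `n ≥ 1`),
then `J ∩ Iⁿ = J·Iⁿ⁻¹` for all `n ≥ 1`. -/
theorem aluffi_torsion_free_of_standard_base {R : Type*} [CommRing R] [IsNoetherianRing R]
    [IsLocalRing R] (J I : Ideal R) (hJI : J ≤ I)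
    (hgen : ∃ (t : ℕ) (f : Fin t → R), J = Ideal.span (Set.range f) ∧
      ∀ i, f i ∈ I ∧ f i ∉ I ^ 2)
    (hstd : ∀ n : ℕ, 1 ≤ n → J ⊓ I ^ n ≤ J * I ^ (n - 1) + I ^ (n + 1)) :
    ∀ n : ℕ, 1 ≤ n → J ⊓ I ^ n = J * I ^ (n - 1) :=
  aluffi_torsion_free_of_standard_base_general J I hJI hstd
end
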